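/- Let G be a transient, connected, locally finite graph and let o be a vertex of G. Then for all integers n, m ≥ 0, P^G_{o,o}( X_n = Y_m, {X_i : i ≥ n} ∩ {Y_j : j > m} = ∅, {X_i : i > n} ∩ {Y_j : j ≤ m} = ∅ ) = Σ_{v ∈ V(G)} (deg(v)²/deg(o)²) · P^G_{v,v}( X_{−n} = Y_{−m} = o, {X_i : i ≥ 0} ∩ {Y_j : j > 0} = ∅, {X_i : i > 0} ∩ {Y_j : j ≤ 0} = ∅ ). (The event on the left-hand side is the event that the lexicographic maximum of {(i,j) : X_i = Y_j} exists and equals (n,m).) -/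

import Mathlib

/-!
Cut both events off at distance `k` from the lexicographic maximum. The truncated events only
see the walks on finite time windows, so their probabilities are countable sums of products of
transition probabilities over path segments. Re-centring time at `(n, m)` maps the truncated
lex-max event onto the truncated time-reversed event; the segments `X[0, n]` and `Y[0, m]` are
then traversed backwards, and reversibility of the walk with respect to the degree measure,
`deg a · p(a, b) = deg b · p(b, a)`, converts each backward segment into the forward one at the
price of a factor `deg(X_n) / deg(o)`. Summing over the vertex `v = X_n = Y_m` and letting
`k → ∞` (continuity from above) gives the identity.
-/

open MeasureTheory
open scoped ENNReal Classical

noncomputable section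

namespace ArborealGas

/-- The degree of a vertex in a graph. -/
def graphDeg {V : Type*} (G : SimpleGraph V) (v : V) : ℕ := (G.neighborSet v).ncard

/-- One-step transition probability of the simple random walk on `G`. -/
def stepProb {V : Type*} (G : SimpleGraph V) (a b : V) : ℝ≥0∞ :=
  if G.Adj a b then ((graphDeg G a : ℝ≥0∞))⁻¹ else 0

/-- `n`-step transition probabilities of the simple random walk on `G`. -/
def transN {V : Type*} (G : SimpleGraph V) : ℕ → V → V → ℝ≥0∞
  | 0 => fun a b => if a = b then 1 else 0
  | n + 1 => fun a b => ∑' c, transN G n a c * stepProb G c b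

/-- `G` is transient: the expected number of visits of the simple random walk to its
starting point is finite. -/
def Transient {V : Type*} (G : SimpleGraph V) : Prop :=
  ∀ v : V, (∑' n : ℕ, transN G n v v) ≠ ⊤

/-- The probability that a doubly-infinite simple random walk on `G` started at `u`
agrees with the path `x` on the time window `[-a, b]`. -/
def walkCylWeight {V : Type*} (G : SimpleGraph V) (u : V) (a b : ℕ) (x : ℤ → V) : ℝ≥0∞ :=
  (if x 0 = u then 1 else 0) *
    (∏ i ∈ Finset.range b, stepProb G (x (i : ℤ)) (x ((i : ℤ) + 1))) *
    (∏ i ∈ Finset.range a, stepProb G (x (-(i : ℤ))) (x (-(i : ℤ) - 1)))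

/-- `μ` is the joint law `P^G_{u,v}` of two independent doubly-infinite simple random walks
`X` and `Y` on `G` started at `u` and `v`, characterized by its cylinder probabilities. -/
def IsDoubleWalkLaw {V : Type*} [MeasurableSpace V] (G : SimpleGraph V) (u v : V)
    (μ : Measure ((ℤ → V) × (ℤ → V))) : Prop :=
  IsProbabilityMeasure μ ∧
  ∀ (a b c d : ℕ) (x y : ℤ → V),
    μ {ω | (∀ i : ℤ, -(a : ℤ) ≤ i → i ≤ (b : ℤ) → ω.1 i = x i) ∧
           (∀ j : ℤ, -(c : ℤ) ≤ j → j ≤ (d : ℤ) → ω.2 j = y j)}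
      = walkCylWeight G u a b x * walkCylWeight G v c d y

/-- The σ-algebra on the space of subgraphs of `G`: the product (cylinder) σ-algebra. -/
instance subgraphMeasurableSpace {V : Type*} (G : SimpleGraph V) :
    MeasurableSpace G.Subgraph :=
  MeasurableSpace.comap
    (fun S => ((fun v => v ∈ S.verts), S.Adj) :
      G.Subgraph → (V → Prop) × (V → V → Prop)) inferInstance

/-- The degree of a vertex inside a subgraph. -/
def subDeg {V : Type*} {G : SimpleGraph V} (S : G.Subgraph) (v : V) : ℕ :=
  {w | S.Adj v w}.ncard

/-- One-step transition probability of the simple random walk on the subgraph `S`. -/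
def stepIn {V : Type*} {G : SimpleGraph V} (S : G.Subgraph) (a b : V) : ℝ≥0∞ :=
  if S.Adj a b then ((subDeg S a : ℝ≥0∞))⁻¹ else 0

/-- The probability that the simple random walk on the subgraph `S` started at `v`
agrees with the path `x` on the time window `[0, n]`. -/
def srwCylIn {V : Type*} {G : SimpleGraph V} (S : G.Subgraph) (v : V) (n : ℕ)
    (x : ℕ → V) : ℝ≥0∞ :=
  (if x 0 = v then 1 else 0) * ∏ i ∈ Finset.range n, stepIn S (x i) (x (i + 1))

/-- `n`-step transition probabilities of the simple random walk on the subgraph `S`. -/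
def transNIn {V : Type*} {G : SimpleGraph V} (S : G.Subgraph) : ℕ → V → V → ℝ≥0∞
  | 0 => fun a b => if a = b then 1 else 0
  | n + 1 => fun a b => ∑' c, transNIn S n a c * stepIn S c b

/-- The Green's function of the simple random walk on the subgraph `S`. -/
def green {V : Type*} {G : SimpleGraph V} (S : G.Subgraph) (a b : V) : ℝ≥0∞ :=
  ∑' n : ℕ, transNIn S n a b

/-- The hypercubic lattice `ℤ^d`: vertices `Fin d → ℤ`, edges between points at
`ℓ¹`-distance one. -/
def ZdGraph (d : ℕ) : SimpleGraph (Fin d → ℤ) where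
  Adj x y := ∑ i, (x i - y i).natAbs = 1
  symm := ⟨by
    intro x y h
    rw [← h]
    exact Finset.sum_congr rfl fun i _ => by omega⟩
  loopless := ⟨by intro x h; simp at h⟩

/-- Translation of subgraphs of `ℤ^d` by a lattice vector `t`. -/
def translateSub {d : ℕ} (t : Fin d → ℤ) (S : (ZdGraph d).Subgraph) :
    (ZdGraph d).Subgraph where
  verts := {v | v - t ∈ S.verts}
  Adj u v := S.Adj (u - t) (v - t)
  adj_sub := by
    intro u v h
    have h2 := S.adj_sub h
    simpa [ZdGraph, sub_sub_sub_cancel_right] using h2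
  edge_vert := by intro u v h; exact S.edge_vert h
  symm := ⟨fun _ _ h => S.symm.symm _ _ h⟩

/-- The subgraph of `G` induced by a set `I` of vertices. -/
def traceSub {V : Type*} (G : SimpleGraph V) (I : Set V) : G.Subgraph where
  verts := I
  Adj u v := G.Adj u v ∧ u ∈ I ∧ v ∈ I
  adj_sub h := h.1
  edge_vert h := h.2.1
  symm := ⟨fun _ _ h => ⟨h.1.symm, h.2.2, h.2.1⟩⟩

open Classical in
/-- The conditional cylinder probability, given the environment `S`, of the walk started at
the origin: if the origin has at least one `S`-neighbour this is the cylinder probability of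
the simple random walk on the component of the origin in `S`; otherwise the walk is frozen
at the origin. -/
def originCondCyl (d : ℕ) (S : (ZdGraph d).Subgraph) (n : ℕ)
    (x : ℕ → Fin d → ℤ) : ℝ≥0∞ :=
  if ∃ b, S.Adj 0 b then srwCylIn S 0 n x
  else if ∀ i ≤ n, x i = 0 then 1 else 0

/-- `μ` is the joint law of a random environment `ω` with law `P` together with (conditionally
on `ω`) a simple random walk started at the origin on the component of the origin in `ω`
(frozen at the origin if the origin has no `ω`-neighbour). -/
def IsEnvWalkLaw (d : ℕ) (P : Measure (ZdGraph d).Subgraph)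
    (μ : Measure ((ZdGraph d).Subgraph × (ℕ → Fin d → ℤ))) : Prop :=
  IsProbabilityMeasure μ ∧ μ.map Prod.fst = P ∧
  ∀ B : Set (ZdGraph d).Subgraph, MeasurableSet B → ∀ (n : ℕ) (x : ℕ → Fin d → ℤ),
    μ (B ×ˢ {ω | ∀ i ≤ n, ω i = x i}) = ∫⁻ S in B, originCondCyl d S n x ∂P

/-- The supremum norm `‖x‖_∞` of a point of `ℤ^d`. -/
def supNormZ {d : ℕ} (x : Fin d → ℤ) : ℕ := Finset.univ.sup fun j => (x j).natAbs

/-- `μ₂` is the joint law of two conditionally independent simple random walks on the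
subgraph `Γ`, both started at `v`, characterized by its cylinder probabilities. -/
def IsPairSRWOn {V : Type*} [MeasurableSpace V] {G : SimpleGraph V} (Γ : G.Subgraph)
    (v : V) (μ₂ : Measure ((ℕ → V) × (ℕ → V))) : Prop :=
  IsProbabilityMeasure μ₂ ∧
  ∀ (n m : ℕ) (x y : ℕ → V),
    μ₂ {ω | (∀ i ≤ n, ω.1 i = x i) ∧ (∀ j ≤ m, ω.2 j = y j)}
      = srwCylIn Γ v n x * srwCylIn Γ v m y

theorem measure_iInter_eq_of_antitone {α : Type*} [MeasurableSpace α] {μ ν : Measure α}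
    {s t : ℕ → Set α} (hs : ∀ k, NullMeasurableSet (s k) μ) (ht : ∀ k, NullMeasurableSet (t k) ν)
    (hs' : Antitone s) (ht' : Antitone t) (hfin : μ (s 0) ≠ ∞) (h : ∀ k, μ (s k) = ν (t k)) :
    μ (⋂ k, s k) = ν (⋂ k, t k) := by
  have hst : ⇑μ ∘ s = ⇑ν ∘ t := funext h
  refine tendsto_nhds_unique (tendsto_measure_iInter_atTop hs hs' ⟨0, hfin⟩) ?_
  rw [hst]
  exact tendsto_measure_iInter_atTop ht ht' ⟨0, h 0 ▸ hfin⟩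

section Reversibility

variable {V : Type*} {G : SimpleGraph V}

lemma graphDeg_ne_zero_of_adj (hlf : ∀ v : V, (G.neighborSet v).Finite) {a b : V}
    (hab : G.Adj a b) : graphDeg G a ≠ 0 :=
  ((Set.ncard_pos (hlf a)).2 ⟨b, hab⟩).ne'

lemma graphDeg_mul_stepProb (hlf : ∀ v : V, (G.neighborSet v).Finite) (a b : V) :
    (graphDeg G a : ℝ≥0∞) * stepProb G a b = if G.Adj a b then 1 else 0 := by
  unfold stepProb
  split_ifs with hab
  · exact ENNReal.mul_inv_cancel (by exact_mod_cast graphDeg_ne_zero_of_adj hlf hab)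
      (ENNReal.natCast_ne_top _)
  · exact mul_zero _

lemma graphDeg_mul_stepProb_comm (hlf : ∀ v : V, (G.neighborSet v).Finite) (a b : V) :
    (graphDeg G a : ℝ≥0∞) * stepProb G a b = graphDeg G b * stepProb G b a := by
  simp only [graphDeg_mul_stepProb hlf, G.adj_comm]

lemma graphDeg_mul_prod_stepProb_reverse (hlf : ∀ v : V, (G.neighborSet v).Finite)
    (x : ℤ → V) (n : ℕ) :
    (graphDeg G (x n) : ℝ≥0∞) * ∏ i ∈ Finset.range n, stepProb G (x (i + 1)) (x i)
      = graphDeg G (x 0) * ∏ i ∈ Finset.range n, stepProb G (x i) (x (i + 1)) := by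
  induction n with
  | zero => simp
  | succ n ih =>
    simp only [Finset.prod_range_succ, Nat.cast_succ]
    calc (graphDeg G (x (n + 1)) : ℝ≥0∞) *
          ((∏ i ∈ Finset.range n, stepProb G (x (i + 1)) (x i)) * stepProb G (x (n + 1)) (x n))
        = (graphDeg G (x (n + 1)) * stepProb G (x (n + 1)) (x n)) *
            ∏ i ∈ Finset.range n, stepProb G (x (i + 1)) (x i) := by ring
      _ = stepProb G (x n) (x (n + 1)) *
            (graphDeg G (x n) * ∏ i ∈ Finset.range n, stepProb G (x (i + 1)) (x i)) := by
          rw [graphDeg_mul_stepProb_comm hlf]; ring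
      _ = _ := by rw [ih]; ring

lemma walkCylWeight_eq_zero {u : V} {a b : ℕ} {x : ℤ → V} (hx : x 0 ≠ u) :
    walkCylWeight G u a b x = 0 := by
  simp [walkCylWeight, hx]

lemma graphDeg_mul_walkCylWeight_shift (hlf : ∀ v : V, (G.neighborSet v).Finite) (x : ℤ → V)
    (n a b : ℕ) :
    (graphDeg G (x n) : ℝ≥0∞) * walkCylWeight G (x n) (n + a) b (fun i => x (i + n))
      = graphDeg G (x 0) * walkCylWeight G (x 0) a (n + b) x := by
  have hfwd : ∏ i ∈ Finset.range b, stepProb G (x (i + n)) (x (i + 1 + n))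
      = ∏ i ∈ Finset.range b, stepProb G (x ↑(n + i)) (x (↑(n + i) + 1)) :=
    Finset.prod_congr rfl fun i _ => by push_cast; ring_nf
  have hback : ∏ i ∈ Finset.range a, stepProb G (x (-↑(n + i) + n)) (x (-↑(n + i) - 1 + n))
      = ∏ i ∈ Finset.range a, stepProb G (x (-i)) (x (-i - 1)) :=
    Finset.prod_congr rfl fun i _ => by push_cast; ring_nf
  have hrev : ∏ i ∈ Finset.range n, stepProb G (x (-i + n)) (x (-i - 1 + n))
      = ∏ i ∈ Finset.range n, stepProb G (x (i + 1)) (x i) := by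
    rw [← Finset.prod_range_reflect]
    refine Finset.prod_congr rfl fun i hi => ?_
    have hcast : ((n - 1 - i : ℕ) : ℤ) = n - 1 - i := by
      have := Finset.mem_range.1 hi; omega
    rw [hcast]; ring_nf
  simp only [walkCylWeight, zero_add, if_true, one_mul, Finset.prod_range_add, hfwd, hback, hrev]
  set F := ∏ i ∈ Finset.range b, stepProb G (x ↑(n + i)) (x (↑(n + i) + 1))
  set B := ∏ i ∈ Finset.range a, stepProb G (x (-i)) (x (-i - 1))
  calc (graphDeg G (x n) : ℝ≥0∞) *
        (F * ((∏ i ∈ Finset.range n, stepProb G (x (i + 1)) (x i)) * B))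
      = (graphDeg G (x n) * ∏ i ∈ Finset.range n, stepProb G (x (i + 1)) (x i)) * F * B := by
        ring
    _ = graphDeg G (x 0) * ((∏ i ∈ Finset.range n, stepProb G (x i) (x (i + 1))) * F * B) := by
        rw [graphDeg_mul_prod_stepProb_reverse hlf]; ring

end Reversibility

section Windows

variable {V : Type*} (a b c d : ℕ)

def windowCyl (x y : ℤ → V) : Set ((ℤ → V) × (ℤ → V)) :=
  {ω | (∀ i : ℤ, -(a : ℤ) ≤ i → i ≤ (b : ℤ) → ω.1 i = x i) ∧
       (∀ j : ℤ, -(c : ℤ) ≤ j → j ≤ (d : ℤ) → ω.2 j = y j)}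

def WindowDetermined (S : Set ((ℤ → V) × (ℤ → V))) : Prop :=
  ∀ ω ω', ω' ∈ windowCyl a b c d ω.1 ω.2 → ω ∈ S → ω' ∈ S

def windowPairs (o : V) : Set ((ℤ → V) × (ℤ → V)) :=
  {z | (∀ i : ℤ, (i < -(a : ℤ) ∨ (b : ℤ) < i) → z.1 i = o) ∧
       (∀ j : ℤ, (j < -(c : ℤ) ∨ (d : ℤ) < j) → z.2 j = o)}

def truncate (o : V) (x : ℤ → V) : ℤ → V :=
  fun i => if -(a : ℤ) ≤ i ∧ i ≤ b then x i else o

variable {a b c d}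

lemma truncate_of_mem {o : V} {x : ℤ → V} {i : ℤ} (ha : -(a : ℤ) ≤ i) (hb : i ≤ b) :
    truncate a b o x i = x i :=
  if_pos ⟨ha, hb⟩

lemma truncate_of_notMem {o : V} {x : ℤ → V} {i : ℤ} (hi : i < -(a : ℤ) ∨ (b : ℤ) < i) :
    truncate a b o x i = o :=
  if_neg (by omega)

variable (a b c d)

def truncPair (o : V) (ω : (ℤ → V) × (ℤ → V)) : windowPairs a b c d o :=
  ⟨(truncate a b o ω.1, truncate c d o ω.2),
    fun _ hi => truncate_of_notMem hi, fun _ hj => truncate_of_notMem hj⟩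

variable {a b c d}

lemma truncPair_eq_iff {o : V} {ω : (ℤ → V) × (ℤ → V)} {z : windowPairs a b c d o} :
    truncPair a b c d o ω = z ↔ ω ∈ windowCyl a b c d z.1.1 z.1.2 := by
  constructor
  · rintro rfl
    exact ⟨fun i ha hb => (truncate_of_mem ha hb).symm,
      fun j hc hd => (truncate_of_mem hc hd).symm⟩
  · rintro ⟨h1, h2⟩
    refine Subtype.ext (Prod.ext (funext fun i => ?_) (funext fun j => ?_))
    · by_cases hi : -(a : ℤ) ≤ i ∧ i ≤ b
      · exact (truncate_of_mem hi.1 hi.2).trans (h1 i hi.1 hi.2)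
      · exact (truncate_of_notMem (by omega)).trans (z.2.1 i (by omega)).symm
    · by_cases hj : -(c : ℤ) ≤ j ∧ j ≤ d
      · exact (truncate_of_mem hj.1 hj.2).trans (h2 j hj.1 hj.2)
      · exact (truncate_of_notMem (by omega)).trans (z.2.2 j (by omega)).symm

lemma truncPair_preimage_singleton (o : V) (z : windowPairs a b c d o) :
    truncPair a b c d o ⁻¹' {z} = windowCyl a b c d z.1.1 z.1.2 :=
  Set.ext fun _ => truncPair_eq_iff

lemma WindowDetermined.preimage_truncPair {S : Set ((ℤ → V) × (ℤ → V))}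
    (hS : WindowDetermined a b c d S) (o : V) :
    truncPair a b c d o ⁻¹' {z | z.1 ∈ S} = S := by
  ext ω
  have hmem : ω ∈ windowCyl a b c d (truncPair a b c d o ω).1.1 (truncPair a b c d o ω).1.2 :=
    truncPair_eq_iff.1 rfl
  refine ⟨hS _ ω hmem, hS ω _ ⟨fun i ha hb => (hmem.1 i ha hb).symm,
    fun j hc hd => (hmem.2 j hc hd).symm⟩⟩

lemma truncPair_coe {o : V} (z : windowPairs a b c d o) : truncPair a b c d o z.1 = z :=
  truncPair_eq_iff.2 ⟨fun _ _ _ => rfl, fun _ _ _ => rfl⟩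

instance [Countable V] (o : V) : Countable (windowPairs a b c d o) := by
  refine Function.Injective.countable (f := fun z : windowPairs a b c d o =>
    ((fun i : Set.Icc (-(a : ℤ)) b => z.1.1 i), (fun j : Set.Icc (-(c : ℤ)) d => z.1.2 j)))
    fun z z' h => ?_
  obtain ⟨h1, h2⟩ := Prod.ext_iff.1 h
  refine (truncPair_eq_iff.2 ?_).symm.trans (truncPair_coe z')
  exact ⟨fun i ha hb => (congrFun h1 ⟨i, ha, hb⟩).symm,
    fun j hc hd => (congrFun h2 ⟨j, hc, hd⟩).symm⟩

lemma measurableSet_windowCyl [MeasurableSpace V] [MeasurableSingletonClass V] (x y : ℤ → V) :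
    MeasurableSet (windowCyl a b c d x y) := by
  simp only [windowCyl, Set.ofPred_and, Set.ofPred_forall]
  exact .inter (.iInter fun i => .iInter fun _ => .iInter fun _ =>
      (measurableSet_singleton (x i)).preimage ((measurable_pi_apply i).comp measurable_fst))
    (.iInter fun j => .iInter fun _ => .iInter fun _ =>
      (measurableSet_singleton (y j)).preimage ((measurable_pi_apply j).comp measurable_snd))

variable [Countable V] [MeasurableSpace V] [MeasurableSingletonClass V]

lemma WindowDetermined.measurableSet {S : Set ((ℤ → V) × (ℤ → V))}
    (hS : WindowDetermined a b c d S) : MeasurableSet S := by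
  obtain rfl | ⟨ω, -⟩ := S.eq_empty_or_nonempty
  · exact .empty
  rw [← hS.preimage_truncPair (ω.1 0), ← Set.biUnion_preimage_singleton]
  exact .biUnion (Set.to_countable _) fun z _ => by
    rw [truncPair_preimage_singleton]; exact measurableSet_windowCyl _ _

lemma IsDoubleWalkLaw.measure_eq_tsum {G : SimpleGraph V} {u v : V}
    {μ : Measure ((ℤ → V) × (ℤ → V))} (hμ : IsDoubleWalkLaw G u v μ) (o : V)
    {S : Set ((ℤ → V) × (ℤ → V))} (hS : WindowDetermined a b c d S) :
    μ S = ∑' z : windowPairs a b c d o,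
      if z.1 ∈ S then walkCylWeight G u a b z.1.1 * walkCylWeight G v c d z.1.2 else 0 := by
  calc μ S = μ (truncPair a b c d o ⁻¹' {z | z.1 ∈ S}) := by rw [hS.preimage_truncPair]
    _ = ∑' z : {z : windowPairs a b c d o | z.1 ∈ S}, μ (truncPair a b c d o ⁻¹' {z.1}) :=
        (tsum_measure_preimage_singleton (Set.to_countable _) fun z _ => by
          rw [truncPair_preimage_singleton]; exact measurableSet_windowCyl _ _).symm
    _ = _ := by
        rw [tsum_subtype _ fun z => μ (truncPair a b c d o ⁻¹' {z})]
        refine tsum_congr fun z => ?_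
        simp only [Set.indicator_apply, Set.mem_ofPred_eq, truncPair_preimage_singleton]
        exact if_congr Iff.rfl (hμ.2 a b c d _ _) rfl

lemma IsDoubleWalkLaw.exists_adj_left {G : SimpleGraph V} {u v : V}
    {μ : Measure ((ℤ → V) × (ℤ → V))} (hμ : IsDoubleWalkLaw G u v μ) : ∃ w, G.Adj u w := by
  by_contra! hu
  have hdet : WindowDetermined 0 1 0 0 (Set.univ : Set ((ℤ → V) × (ℤ → V))) :=
    fun _ _ _ _ => trivial
  have hzero : ∀ x : ℤ → V, walkCylWeight G u 0 1 x = 0 := fun x => by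
    by_cases hx : x 0 = u
    · simp [walkCylWeight, stepProb, hx, hu]
    · exact walkCylWeight_eq_zero hx
  have := hμ.1.measure_univ
  rw [hμ.measure_eq_tsum u hdet] at this
  simp [hzero] at this

end Windows

section Events

variable {V : Type*}

/-- No intersection time `(i, j)` within distance `k` of `(p, q)` is lexicographically
larger than `(p, q)`. -/
def NoIntersectionLexAfter (p q : ℤ) (k : ℕ) (ω : (ℤ → V) × (ℤ → V)) : Prop :=
  (∀ i j : ℤ, p ≤ i → i ≤ p + k → q < j → j ≤ q + k → ω.1 i ≠ ω.2 j) ∧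
  (∀ i j : ℤ, p < i → i ≤ p + k → q - k ≤ j → j ≤ q → ω.1 i ≠ ω.2 j)

def shiftPair (s t : ℤ) (ω : (ℤ → V) × (ℤ → V)) : (ℤ → V) × (ℤ → V) :=
  (fun i => ω.1 (i + s), fun j => ω.2 (j + t))

lemma noIntersectionLexAfter_shiftPair {p q s t : ℤ} {k : ℕ} {ω : (ℤ → V) × (ℤ → V)} :
    NoIntersectionLexAfter p q k (shiftPair s t ω) ↔
      NoIntersectionLexAfter (p + s) (q + t) k ω := by
  simp only [NoIntersectionLexAfter, shiftPair]
  constructor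
  · rintro ⟨h1, h2⟩
    refine ⟨fun i j _ _ _ _ => ?_, fun i j _ _ _ _ => ?_⟩
    · simpa using h1 (i - s) (j - t) (by omega) (by omega) (by omega) (by omega)
    · simpa using h2 (i - s) (j - t) (by omega) (by omega) (by omega) (by omega)
  · rintro ⟨h1, h2⟩
    exact ⟨fun i j _ _ _ _ => h1 _ _ (by omega) (by omega) (by omega) (by omega),
      fun i j _ _ _ _ => h2 _ _ (by omega) (by omega) (by omega) (by omega)⟩

lemma NoIntersectionLexAfter.mono {p q : ℤ} {k k' : ℕ} {ω : (ℤ → V) × (ℤ → V)} (hk : k ≤ k')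
    (h : NoIntersectionLexAfter p q k' ω) : NoIntersectionLexAfter p q k ω :=
  ⟨fun i j _ _ _ _ => h.1 i j (by omega) (by omega) (by omega) (by omega),
    fun i j _ _ _ _ => h.2 i j (by omega) (by omega) (by omega) (by omega)⟩

lemma forall_noIntersectionLexAfter_iff {p q : ℤ} {ω : (ℤ → V) × (ℤ → V)} :
    (∀ k, NoIntersectionLexAfter p q k ω) ↔
      (∀ i : ℤ, p ≤ i → ∀ j : ℤ, q < j → ω.1 i ≠ ω.2 j) ∧
        (∀ i : ℤ, p < i → ∀ j : ℤ, j ≤ q → ω.1 i ≠ ω.2 j) := by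
  constructor
  · intro h
    refine ⟨fun i hi j hj => ?_, fun i hi j hj => ?_⟩
    · exact (h ((i - p).toNat + (j - q).toNat)).1 i j hi (by omega) hj (by omega)
    · exact (h ((i - p).toNat + (q - j).toNat)).2 i j hi (by omega) (by omega) hj
  · rintro ⟨h1, h2⟩ k
    exact ⟨fun i j hi _ hj _ => h1 i hi j hj, fun i j hi _ _ hj => h2 i hi j hj⟩

lemma NoIntersectionLexAfter.of_windowCyl {p q : ℤ} {k a b c d : ℕ}
    {ω ω' : (ℤ → V) × (ℤ → V)} (ha : -(a : ℤ) ≤ p) (hb : p + k ≤ b) (hc : -(c : ℤ) ≤ q - k)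
    (hd : q + k ≤ d) (hω' : ω' ∈ windowCyl a b c d ω.1 ω.2)
    (h : NoIntersectionLexAfter p q k ω) : NoIntersectionLexAfter p q k ω' := by
  obtain ⟨h1, h2⟩ := hω'
  refine ⟨fun i j _ _ _ _ => ?_, fun i j _ _ _ _ => ?_⟩
  · rw [h1 i (by omega) (by omega), h2 j (by omega) (by omega)]
    exact h.1 i j ‹_› ‹_› ‹_› ‹_›
  · rw [h1 i (by omega) (by omega), h2 j (by omega) (by omega)]
    exact h.2 i j ‹_› ‹_› ‹_› ‹_›

def lexMaxEventUpTo (n m k : ℕ) : Set ((ℤ → V) × (ℤ → V)) :=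
  {ω | ω.1 n = ω.2 m ∧ NoIntersectionLexAfter n m k ω}

def reversedEventUpTo (n m k : ℕ) (o : V) : Set ((ℤ → V) × (ℤ → V)) :=
  {ω | ω.1 (-n) = o ∧ ω.2 (-m) = o ∧ NoIntersectionLexAfter 0 0 k ω}

lemma iInter_lexMaxEventUpTo (n m : ℕ) :
    ⋂ k, lexMaxEventUpTo n m k = {ω : (ℤ → V) × (ℤ → V) | ω.1 (n : ℤ) = ω.2 (m : ℤ) ∧
        (∀ i : ℤ, (n : ℤ) ≤ i → ∀ j : ℤ, (m : ℤ) < j → ω.1 i ≠ ω.2 j) ∧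
        (∀ i : ℤ, (n : ℤ) < i → ∀ j : ℤ, j ≤ (m : ℤ) → ω.1 i ≠ ω.2 j)} := by
  ext ω
  simp only [lexMaxEventUpTo, Set.mem_iInter, Set.mem_ofPred_eq, forall_and,
    forall_noIntersectionLexAfter_iff, forall_const]

lemma iInter_reversedEventUpTo (n m : ℕ) (o : V) :
    ⋂ k, reversedEventUpTo n m k o = {ω : (ℤ → V) × (ℤ → V) |
      ω.1 (-(n : ℤ)) = o ∧ ω.2 (-(m : ℤ)) = o ∧
        (∀ i : ℤ, 0 ≤ i → ∀ j : ℤ, 0 < j → ω.1 i ≠ ω.2 j) ∧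
        (∀ i : ℤ, 0 < i → ∀ j : ℤ, j ≤ 0 → ω.1 i ≠ ω.2 j)} := by
  ext ω
  simp only [reversedEventUpTo, Set.mem_iInter, Set.mem_ofPred_eq, forall_and,
    forall_noIntersectionLexAfter_iff, forall_const]

lemma antitone_lexMaxEventUpTo (n m : ℕ) :
    Antitone fun k => (lexMaxEventUpTo n m k : Set ((ℤ → V) × (ℤ → V))) :=
  fun _ _ hk _ hω => ⟨hω.1, hω.2.mono hk⟩

lemma antitone_reversedEventUpTo (n m : ℕ) (o : V) :
    Antitone fun k => reversedEventUpTo n m k o :=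
  fun _ _ hk _ hω => ⟨hω.1, hω.2.1, hω.2.2.mono hk⟩

lemma windowDetermined_lexMaxEventUpTo (n m k : ℕ) :
    WindowDetermined 0 (n + k) k (m + k) (lexMaxEventUpTo n m k : Set ((ℤ → V) × (ℤ → V))) :=
  fun ω ω' hω' hω => ⟨by
    rw [hω'.1 n (by omega) (by omega), hω'.2 m (by omega) (by omega)]; exact hω.1,
    hω.2.of_windowCyl (by omega) (by omega) (by omega) (by omega) hω'⟩

lemma windowDetermined_reversedEventUpTo (n m k : ℕ) (o : V) :
    WindowDetermined n k (m + k) k (reversedEventUpTo n m k o) :=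
  fun ω ω' hω' hω => ⟨by rw [hω'.1 (-n) le_rfl (by omega)]; exact hω.1,
    by rw [hω'.2 (-m) (by omega) (by omega)]; exact hω.2.1,
    hω.2.2.of_windowCyl (by omega) (by omega) (by omega) (by omega) hω'⟩

lemma shiftPair_mem_reversedEventUpTo {n m k : ℕ} {o : V} {ω : (ℤ → V) × (ℤ → V)} :
    shiftPair n m ω ∈ reversedEventUpTo n m k o ↔
      ω.1 0 = o ∧ ω.2 0 = o ∧ NoIntersectionLexAfter n m k ω := by
  simp only [reversedEventUpTo, Set.mem_ofPred_eq, noIntersectionLexAfter_shiftPair, zero_add]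
  simp [shiftPair]

end Events

section TimeReversal

variable {V : Type*}

def windowPairsShiftEquiv (a b c d n m : ℕ) (o : V) :
    windowPairs a (n + b) c (m + d) o ≃ windowPairs (n + a) b (m + c) d o where
  toFun z := ⟨shiftPair n m z.1,
    fun i hi => z.2.1 (i + n) (by omega), fun j hj => z.2.2 (j + m) (by omega)⟩
  invFun w := ⟨shiftPair (-n) (-m) w.1,
    fun i hi => w.2.1 (i + -n) (by omega), fun j hj => w.2.2 (j + -m) (by omega)⟩
  left_inv z := by simp [shiftPair]
  right_inv w := by simp [shiftPair]

variable {G : SimpleGraph V}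

lemma degSq_mul_weight_shiftPair (hlf : ∀ v : V, (G.neighborSet v).Finite) {o : V}
    (ho : graphDeg G o ≠ 0) (n m k : ℕ) (z : (ℤ → V) × (ℤ → V)) :
    (graphDeg G (z.1 n) : ℝ≥0∞) ^ 2 / (graphDeg G o : ℝ≥0∞) ^ 2 *
      (if shiftPair n m z ∈ reversedEventUpTo n m k o then
        walkCylWeight G (z.1 n) n k (shiftPair n m z).1 *
          walkCylWeight G (z.1 n) (m + k) k (shiftPair n m z).2 else 0)
    = if z ∈ lexMaxEventUpTo n m k then
        walkCylWeight G o 0 (n + k) z.1 * walkCylWeight G o k (m + k) z.2 else 0 := by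
  by_cases hN : NoIntersectionLexAfter n m k z
  swap
  · simp [shiftPair_mem_reversedEventUpTo, lexMaxEventUpTo, hN]
  by_cases hnm : z.1 n = z.2 m
  swap
  · have : walkCylWeight G (z.1 n) (m + k) k (shiftPair n m z).2 = 0 :=
      walkCylWeight_eq_zero (by simpa [shiftPair] using Ne.symm hnm)
    simp [lexMaxEventUpTo, hnm, this]
  by_cases hz : z.1 0 = o ∧ z.2 0 = o
  swap
  · have : walkCylWeight G o 0 (n + k) z.1 * walkCylWeight G o k (m + k) z.2 = 0 := by
      by_cases h10 : z.1 0 = o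
      · rw [walkCylWeight_eq_zero (hz ⟨h10, ·⟩), mul_zero]
      · rw [walkCylWeight_eq_zero h10, zero_mul]
    have hF : shiftPair n m z ∉ reversedEventUpTo n m k o := fun h =>
      hz ((shiftPair_mem_reversedEventUpTo.1 h).imp_right And.left)
    rw [if_neg hF, mul_zero, if_pos ⟨hnm, hN⟩, this]
  obtain ⟨h10, h20⟩ := hz
  rw [if_pos (shiftPair_mem_reversedEventUpTo.2 ⟨h10, h20, hN⟩), if_pos ⟨hnm, hN⟩]
  have h1 := graphDeg_mul_walkCylWeight_shift hlf z.1 n 0 k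
  have h2 := graphDeg_mul_walkCylWeight_shift hlf z.2 m k k
  rw [add_zero, h10] at h1
  rw [← hnm, h20] at h2
  set d : ℝ≥0∞ := (graphDeg G (z.1 n) : ℝ≥0∞)
  set W₁ := walkCylWeight G o 0 (n + k) z.1
  set W₂ := walkCylWeight G o k (m + k) z.2
  calc d ^ 2 / (graphDeg G o : ℝ≥0∞) ^ 2 *
        (walkCylWeight G (z.1 n) n k (shiftPair n m z).1 *
          walkCylWeight G (z.1 n) (m + k) k (shiftPair n m z).2)
      = (d * walkCylWeight G (z.1 n) n k (shiftPair n m z).1) *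
          (d * walkCylWeight G (z.1 n) (m + k) k (shiftPair n m z).2) /
            (graphDeg G o : ℝ≥0∞) ^ 2 := by
        simp only [div_eq_mul_inv]; ring
    _ = W₁ * W₂ * (graphDeg G o : ℝ≥0∞) ^ 2 / (graphDeg G o : ℝ≥0∞) ^ 2 := by
        rw [shiftPair, h1, h2, mul_mul_mul_comm, ← sq, mul_comm]
    _ = W₁ * W₂ := ENNReal.mul_div_cancel_right (by simpa using ho) (by simp)

variable [Countable V] [MeasurableSpace V] [MeasurableSingletonClass V]

lemma measure_lexMaxEventUpTo (hlf : ∀ v : V, (G.neighborSet v).Finite) {o : V}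
    (ho : graphDeg G o ≠ 0) {μ : Measure ((ℤ → V) × (ℤ → V))} (hμ : IsDoubleWalkLaw G o o μ)
    {ν : V → Measure ((ℤ → V) × (ℤ → V))} (hν : ∀ v, IsDoubleWalkLaw G v v (ν v))
    (n m k : ℕ) :
    μ (lexMaxEventUpTo n m k) = ∑' v, (graphDeg G v : ℝ≥0∞) ^ 2 / (graphDeg G o : ℝ≥0∞) ^ 2 *
      ν v (reversedEventUpTo n m k o) := by
  set c : V → ℝ≥0∞ := fun v => (graphDeg G v : ℝ≥0∞) ^ 2 / (graphDeg G o : ℝ≥0∞) ^ 2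
  set w : V → (ℤ → V) × (ℤ → V) → ℝ≥0∞ := fun v z =>
    if z ∈ reversedEventUpTo n m k o then
      walkCylWeight G v n k z.1 * walkCylWeight G v (m + k) k z.2 else 0
  have hcollapse (z : (ℤ → V) × (ℤ → V)) : ∑' v, c v * w v z = c (z.1 0) * w (z.1 0) z :=
    tsum_eq_single _ fun v hv => by simp [w, walkCylWeight_eq_zero (Ne.symm hv)]
  calc μ (lexMaxEventUpTo n m k)
      = ∑' z : windowPairs 0 (n + k) k (m + k) o, if z.1 ∈ lexMaxEventUpTo n m k then
          walkCylWeight G o 0 (n + k) z.1.1 * walkCylWeight G o k (m + k) z.1.2 else 0 :=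
        hμ.measure_eq_tsum o (windowDetermined_lexMaxEventUpTo n m k)
    _ = ∑' z : windowPairs 0 (n + k) k (m + k) o,
          c (z.1.1 n) * w (z.1.1 n) (shiftPair n m z.1) :=
        tsum_congr fun z => (degSq_mul_weight_shiftPair hlf ho n m k z.1).symm
    _ = ∑' z : windowPairs n k (m + k) k o, c (z.1.1 0) * w (z.1.1 0) z.1 := by
        refine (tsum_congr fun z => ?_).trans ((windowPairsShiftEquiv 0 k k k n m o).tsum_eq _)
        simp [windowPairsShiftEquiv, shiftPair]
    _ = ∑' z : windowPairs n k (m + k) k o, ∑' v, c v * w v z.1 :=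
        tsum_congr fun z => (hcollapse z.1).symm
    _ = ∑' v, c v * ∑' z : windowPairs n k (m + k) k o, w v z.1 := by
        rw [ENNReal.tsum_comm]; simp_rw [ENNReal.tsum_mul_left]
    _ = _ := by
        simp_rw [(hν _).measure_eq_tsum o (windowDetermined_reversedEventUpTo n m k o)]
        rfl

end TimeReversal

theorem lex_max_time_reversal_identity_general
    {V : Type*} [Countable V] [MeasurableSpace V] [DiscreteMeasurableSpace V]
    (G : SimpleGraph V) (hlf : ∀ v : V, (G.neighborSet v).Finite)
    (o : V)
    (μ : Measure ((ℤ → V) × (ℤ → V))) (hμ : IsDoubleWalkLaw G o o μ)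
    (ν : V → Measure ((ℤ → V) × (ℤ → V))) (hν : ∀ v, IsDoubleWalkLaw G v v (ν v))
    (n m : ℕ) :
    μ {ω | ω.1 (n : ℤ) = ω.2 (m : ℤ) ∧
        (∀ i : ℤ, (n : ℤ) ≤ i → ∀ j : ℤ, (m : ℤ) < j → ω.1 i ≠ ω.2 j) ∧
        (∀ i : ℤ, (n : ℤ) < i → ∀ j : ℤ, j ≤ (m : ℤ) → ω.1 i ≠ ω.2 j)}
      = ∑' v : V, ((graphDeg G v : ℝ≥0∞) ^ 2 / (graphDeg G o : ℝ≥0∞) ^ 2) *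
          ν v {ω | ω.1 (-(n : ℤ)) = o ∧ ω.2 (-(m : ℤ)) = o ∧
            (∀ i : ℤ, 0 ≤ i → ∀ j : ℤ, 0 < j → ω.1 i ≠ ω.2 j) ∧
            (∀ i : ℤ, 0 < i → ∀ j : ℤ, j ≤ 0 → ω.1 i ≠ ω.2 j)} := by
  obtain ⟨_, hadj⟩ := hμ.exists_adj_left
  have ho := graphDeg_ne_zero_of_adj hlf hadj
  have : IsProbabilityMeasure μ := hμ.1
  set ρ := Measure.sum fun v => ((graphDeg G v : ℝ≥0∞) ^ 2 / (graphDeg G o : ℝ≥0∞) ^ 2) • ν v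
  have hρ {S : Set ((ℤ → V) × (ℤ → V))} (hS : MeasurableSet S) :
      ρ S = ∑' v, (graphDeg G v : ℝ≥0∞) ^ 2 / (graphDeg G o : ℝ≥0∞) ^ 2 * ν v S := by
    simp [ρ, Measure.sum_apply _ hS]
  have hF (k : ℕ) := (windowDetermined_reversedEventUpTo n m k o).measurableSet
  rw [← iInter_lexMaxEventUpTo, ← iInter_reversedEventUpTo, ← hρ (.iInter hF)]
  refine measure_iInter_eq_of_antitone
    (fun k => (windowDetermined_lexMaxEventUpTo n m k).measurableSet.nullMeasurableSet)
    (fun k => (hF k).nullMeasurableSet) (antitone_lexMaxEventUpTo n m)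
    (antitone_reversedEventUpTo n m o) (measure_ne_top μ _) fun k => ?_
  rw [hρ (hF k), measure_lexMaxEventUpTo hlf ho hμ hν]

/-- Lemma 4.3: time-reversal identity for the lex-max intersection.
Let `G` be a transient, connected, locally finite graph and `o` a vertex. For all
`n, m ≥ 0`, the `P^G_{o,o}`-probability of the event that the lexicographic maximum of
`{(i,j) : X_i = Y_j}` exists and equals `(n,m)` equals
`∑_v (deg(v)²/deg(o)²) · P^G_{v,v}(X_{-n} = Y_{-m} = o, {X_i}_{i≥0} ∩ {Y_j}_{j>0} = ∅,
{X_i}_{i>0} ∩ {Y_j}_{j≤0} = ∅)`. -/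
theorem lex_max_time_reversal_identity
    {V : Type*} [Countable V] [MeasurableSpace V] [DiscreteMeasurableSpace V]
    (G : SimpleGraph V) (hlf : ∀ v : V, (G.neighborSet v).Finite)
    (hconn : G.Connected) (htrans : Transient G) (o : V)
    (μ : Measure ((ℤ → V) × (ℤ → V))) (hμ : IsDoubleWalkLaw G o o μ)
    (ν : V → Measure ((ℤ → V) × (ℤ → V))) (hν : ∀ v, IsDoubleWalkLaw G v v (ν v))
    (n m : ℕ) :
    μ {ω | ω.1 (n : ℤ) = ω.2 (m : ℤ) ∧
        (∀ i : ℤ, (n : ℤ) ≤ i → ∀ j : ℤ, (m : ℤ) < j → ω.1 i ≠ ω.2 j) ∧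
        (∀ i : ℤ, (n : ℤ) < i → ∀ j : ℤ, j ≤ (m : ℤ) → ω.1 i ≠ ω.2 j)}
      = ∑' v : V, ((graphDeg G v : ℝ≥0∞) ^ 2 / (graphDeg G o : ℝ≥0∞) ^ 2) *
          ν v {ω | ω.1 (-(n : ℤ)) = o ∧ ω.2 (-(m : ℤ)) = o ∧
            (∀ i : ℤ, 0 ≤ i → ∀ j : ℤ, 0 < j → ω.1 i ≠ ω.2 j) ∧
            (∀ i : ℤ, 0 < i → ∀ j : ℤ, j ≤ 0 → ω.1 i ≠ ω.2 j)} :=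
  lex_max_time_reversal_identity_general G hlf o μ hμ ν hν n m

end ArborealGas

end
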